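/- arXiv:2202.05515 — 3 statements merged into one kernel-verified Lean document; each statement's English description precedes it below -/
import Mathlib

section
/- Let m, b, z, t be positive integers and let K = m·b. Suppose t < ⌊b/z⌋, m·t < ⌊K/z⌋, and t·K·z < b·(K − b). Then, as rational numbers, b − t·z ≤ (K − m·t·z)²/K. (That is, at normalized memory size M/N = t/b = (m·t)/K with M/N < min{⌊b/z⌋/b, ⌊K/z⌋/K, (K−b)/(K·z)}, the rate b − t·z of the proposed scheme is at most the rate (K − t′z)²/K of the RK scheme with t′ = m·t.) -/
/-- At `M/N = t/b = (mt)/K` with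
`M/N < min(⌊b/z⌋/b, ⌊K/z⌋/K, (K-b)/(Kz))`, the rate `b - tz` of the proposed
scheme is at most the rate `(K - t'z)²/K` of the RK scheme with `t' = mt`,
where `K = mb`. -/
theorem rate_le_RK (m b z t : ℕ) (hm : 0 < m) (hb : 0 < b) (hz : 0 < z)
    (ht : 0 < t) (h1 : t < b / z) (h2 : m * t < (m * b) / z)
    (h3 : t * (m * b) * z < b * (m * b - b)) :
    (b : ℚ) - t * z ≤ ((m * b : ℚ) - m * t * z) ^ 2 / (m * b) := by
  -- t*z < b
  have h4 : t * z < b :=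
    lt_of_lt_of_le ((Nat.mul_lt_mul_right hz).2 h1) (Nat.div_mul_le_self b z)
  -- m*t*z + b ≤ m*b
  have h5 : m * t * z + b ≤ m * b := by
    have hb' : b ≤ m * b := Nat.le_mul_of_pos_left b hm
    have h3' : (t * m * z) * b < (m * b - b) * b := by
      have : t * (m * b) * z = (t * m * z) * b := by ring
      rw [this] at h3; linarith [h3, Nat.mul_comm b (m * b - b)]
    have h6 : t * m * z < m * b - b := lt_of_mul_lt_mul_right h3' (Nat.zero_le b)
    have : m * t * z = t * m * z := by ring
    omega
  have hq4 : (t : ℚ) * z < b := by exact_mod_cast h4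
  have hq5 : (m : ℚ) * t * z + b ≤ m * b := by exact_mod_cast h5
  have hmb : (0 : ℚ) < (m : ℚ) * b := by positivity
  rw [le_div_iff₀ hmb]
  nlinarith [sq_nonneg ((m : ℚ) * b - m * t * z - b)]
end

section
/- Let m, b, z be positive integers, let K = m·b, and suppose b > z, m ≤ ⌊K/z⌋, and (as real numbers) b ≥ √(K·(z−1)) + 1. Then b^m ≤ b·C(m·b − m·z + m − 1, m − 1), where C(·,·) denotes the binomial coefficient. (That is, at normalized memory size M/N = 1/b = m/K, the subpacketization level b^m of the proposed scheme is at most the subpacketization level (K/t′)·C(K − t′z + t′ − 1, t′ − 1) of the RK and SICPS schemes with t′ = m, and hence also at most the subpacketization level K·C(K − t′z + t′, t′) of the NT scheme.) -/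
lemma prod_range_sub_eq_factorial (n : ℕ) : (∏ i ∈ Finset.range n, (n - i)) = Nat.factorial n := by
  rw [← Finset.prod_range_add_one_eq_factorial, ← Finset.prod_range_reflect (fun j => j + 1) n]
  apply Finset.prod_congr rfl
  intro i hi
  simp only [Finset.mem_range] at hi
  omega

/-- At `M/N = 1/b = m/K`, if `b > z`, `m ≤ ⌊K/z⌋` and `b ≥ √(K(z-1)) + 1`,
then the subpacketization level `b^m` of the proposed scheme is at most the
subpacketization level `b·C(mb - mz + m - 1, m - 1)` of the RK and SICPS
schemes (with `t' = m`, `K = mb`). -/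
theorem subpacketization_le_SICPS (m b z : ℕ) (hm : 0 < m) (hb : 0 < b)
    (hz : 0 < z) (hbz : z < b) (hmK : m ≤ (m * b) / z)
    (hsqrt : Real.sqrt ((m * b : ℝ) * ((z : ℝ) - 1)) + 1 ≤ (b : ℝ)) :
    b ^ m ≤ b * Nat.choose (m * b - m * z + m - 1) (m - 1) := by
  -- Step 1: from the sqrt hypothesis, get m*b*(z-1) ≤ (b-1)^2 in ℕ
  have hx : (0 : ℝ) ≤ (m * b : ℝ) * ((z : ℝ) - 1) := by
    have h1 : (1 : ℝ) ≤ (z : ℝ) := by exact_mod_cast hz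
    have h2 : (0 : ℝ) ≤ (m * b : ℝ) := by positivity
    nlinarith
  have hb1R : Real.sqrt ((m * b : ℝ) * ((z : ℝ) - 1)) ≤ (b : ℝ) - 1 := by linarith
  have hsq : (m * b : ℝ) * ((z : ℝ) - 1) ≤ ((b : ℝ) - 1) ^ 2 := by
    have h0 : (0 : ℝ) ≤ Real.sqrt ((m * b : ℝ) * ((z : ℝ) - 1)) := Real.sqrt_nonneg _
    nlinarith [Real.sq_sqrt hx]
  have hsqN : m * b * (z - 1) ≤ (b - 1) ^ 2 := by
    have h1 : (1 : ℕ) ≤ z := hz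
    have h2 : (1 : ℕ) ≤ b := hb
    have hcast : ((m * b * (z - 1) : ℕ) : ℝ) ≤ (((b - 1) ^ 2 : ℕ) : ℝ) := by
      push_cast [h1, h2]
      nlinarith [hsq]
    exact_mod_cast hcast
  -- Step 2: key inequality m*(z-1) ≤ b - 1, i.e. m*z + 1 ≤ b + m
  have hkey : m * z + 1 ≤ b + m := by
    have h1 : m * (z - 1) * (b - 1) ≤ (b - 1) * (b - 1) := by
      calc m * (z - 1) * (b - 1) ≤ m * (z - 1) * b := by
            exact Nat.mul_le_mul_left _ (Nat.sub_le b 1)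
        _ = m * b * (z - 1) := by ring
        _ ≤ (b - 1) ^ 2 := hsqN
        _ = (b - 1) * (b - 1) := sq (b - 1)
    have hb1 : 0 < b - 1 := by omega
    have h2 : m * (z - 1) ≤ b - 1 := Nat.le_of_mul_le_mul_right h1 hb1
    have h3 : m * (z - 1) + m * 1 = m * z := by
      rw [← Nat.mul_add]
      congr 1
      omega
    calc m * z + 1 = m * (z - 1) + m * 1 + 1 := by rw [h3]
      _ ≤ (b - 1) + m * 1 + 1 := by
          exact Nat.add_le_add_right (Nat.add_le_add_right h2 _) 1
      _ ≤ b + m := by omega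
  -- Step 3: reduce to m = m' + 1
  obtain ⟨m', rfl⟩ : ∃ m', m = m' + 1 := ⟨m - 1, by omega⟩
  set n : ℕ := (m' + 1) * b - (m' + 1) * z + (m' + 1) - 1 with hn
  have hzb : (m' + 1) * z ≤ (m' + 1) * b := Nat.mul_le_mul_left _ hbz.le
  have hn' : n = (m' + 1) * b - (m' + 1) * z + m' := by omega
  -- factorwise inequality
  have hfac : ∀ i ∈ Finset.range m', b * (m' - i) ≤ n - i := by
    intro i hi
    simp only [Finset.mem_range] at hi
    have hi' : i ≤ m' := hi.le
    have hilen : i ≤ n := by omega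
    rw [hn']
    zify [hi', hzb, show i ≤ (m' + 1) * b - (m' + 1) * z + m' by omega]
    have hkeyZ : ((m' : ℤ) + 1) * z + 1 ≤ b + (m' + 1) := by exact_mod_cast hkey
    have hiZ : (0 : ℤ) ≤ i := Int.ofNat_nonneg i
    have hbZ : (1 : ℤ) ≤ b := by exact_mod_cast hb
    nlinarith [mul_nonneg hiZ (show (0:ℤ) ≤ (b:ℤ) - 1 by linarith)]
  -- Step 4: product comparison
  have hprod : Nat.factorial m' * b ^ m' ≤ n.descFactorial m' := by
    rw [Nat.descFactorial_eq_prod_range]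
    calc Nat.factorial m' * b ^ m' = ∏ i ∈ Finset.range m', b * (m' - i) := by
          rw [Finset.prod_mul_distrib, Finset.prod_const, Finset.card_range,
            prod_range_sub_eq_factorial]
          ring
      _ ≤ ∏ i ∈ Finset.range m', (n - i) := Finset.prod_le_prod' hfac
  rw [Nat.descFactorial_eq_factorial_mul_choose] at hprod
  have hchoose : b ^ m' ≤ n.choose m' := by
    exact Nat.le_of_mul_le_mul_left hprod (Nat.factorial_pos m')
  have : (m' + 1) - 1 = m' := by omega
  rw [this]
  calc b ^ (m' + 1) = b * b ^ m' := by ring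
    _ ≤ b * n.choose m' := Nat.mul_le_mul_left b hchoose
end

section
/- Let m, b, z be positive integers with b ≥ z and b ≥ m·(z − 1) + 1. Then b^m ≤ b·C(m·b − m·z + m − 1, m − 1), where C(·,·) denotes the binomial coefficient. -/
/-! Write `n = mb - mz + m - 1`; for `m ≥ 1` the bound on `b` gives `n ≥ b (m - 1)`. Since
`C(n, k) = ∏_{i<k} (n - i)/(k - i)` and `n - i ≥ b (k - i)` whenever `n ≥ b k`, we get
`C(n, m - 1) ≥ b ^ (m - 1)`. -/

open Nat

namespace Nat

theorem pow_mul_factorial_le_descFactorial {b k n : ℕ} (h : b * k ≤ n) :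
    b ^ k * k ! ≤ n.descFactorial k := by
  rw [← descFactorial_self, descFactorial_eq_prod_range, descFactorial_eq_prod_range,
    ← Finset.card_range k, ← Finset.prod_const, Finset.card_range, ← Finset.prod_mul_distrib]
  refine Finset.prod_le_prod' fun i hi => ?_
  have hik : i < k := Finset.mem_range.mp hi
  rcases Nat.eq_zero_or_pos b with rfl | hb
  · simp
  · have : i ≤ b * i := Nat.le_mul_of_pos_left i hb
    have : b * (k - i) + b * i = b * k := by rw [← Nat.mul_add, Nat.sub_add_cancel hik.le]
    omega

theorem pow_le_choose_of_mul_le {b k n : ℕ} (h : b * k ≤ n) : b ^ k ≤ n.choose k := by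
  have := pow_mul_factorial_le_descFactorial h
  rw [descFactorial_eq_factorial_mul_choose, Nat.mul_comm k !] at this
  exact Nat.le_of_mul_le_mul_right this k.factorial_pos

end Nat

theorem subpacketization_core_ineq_general (m b z : ℕ) (hb2 : m * (z - 1) + 1 ≤ b) :
    b ^ m ≤ b * Nat.choose (m * b - m * z + m - 1) (m - 1) := by
  rcases m with _ | k
  · simpa using hb2
  have hz : (k + 1) * z ≤ (k + 1) * (z - 1) + (k + 1) :=
    (Nat.mul_le_mul_left _ (by omega : z ≤ z - 1 + 1)).trans_eq (Nat.mul_succ _ _)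
  have hb : (k + 1) * b = b * k + b := by ring
  have hn : b * k ≤ (k + 1) * b - (k + 1) * z + (k + 1) - 1 := by omega
  rw [pow_succ', Nat.add_sub_cancel]
  exact Nat.mul_le_mul_left b (pow_le_choose_of_mul_le hn)

/-- If `b ≥ z` and `b ≥ m(z-1) + 1`, then
`b^m ≤ b·C(mb - mz + m - 1, m - 1)`. -/
theorem subpacketization_core_ineq (m b z : ℕ) (hm : 0 < m) (hb : 0 < b)
    (hz : 0 < z) (hbz : z ≤ b) (hb2 : m * (z - 1) + 1 ≤ b) :
    b ^ m ≤ b * Nat.choose (m * b - m * z + m - 1) (m - 1) :=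
  subpacketization_core_ineq_general m b z hb2
end
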